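/- Let d ≥ 3, n = (n₁,…,n_d) with each n_j ≥ 1, F = ℝ or ℂ, and let T ∈ F^{n₁×⋯×n_d} satisfy ‖T‖ = 1. If either ‖T‖_{1,F} = α(n,F) or ‖T‖_{∞,F} = β(n,F), then ‖T‖_{1,F}·‖T‖_{∞,F} = 1. In particular, ‖T‖_{1,F} = α(n,F) if and only if ‖T‖_{∞,F} = β(n,F). -/

import Mathlib

/-! Hölder's inequality `|⟨T, Y⟩| ≤ ‖T‖₁ ‖Y‖_∞` gives `1 ≤ ‖T‖₁ ‖T‖_∞` for every unit `T`, hence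
`αβ ≥ 1`. Conversely the nuclear norm is a seminorm dominating `|⟨·, Y⟩|` exactly when
`‖Y‖_∞ ≤ 1`, so Hahn–Banach gives every `T` a certificate `Y` with `‖Y‖_∞ ≤ 1` and
`⟨T, Y⟩ = ‖T‖₁`; as `β ‖Y‖ ≤ ‖Y‖_∞`, Cauchy–Schwarz yields `β ‖T‖₁ ≤ 1` on the unit sphere,
so `αβ = 1`. If `‖T‖_∞ = β`, then `‖T‖₁ ≥ 1/β = α`. If `‖T‖₁ = α`, the certificate attains
equality in Cauchy–Schwarz, so `Y = α T` and `‖T‖_∞ ≤ ‖Y‖_∞ / α ≤ β`. -/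

noncomputable section


/-- The Euclidean norm of a vector in `𝕜^k`. -/
def vnorm {𝕜 : Type*} [RCLike 𝕜] {k : ℕ} (x : Fin k → 𝕜) : ℝ :=
  Real.sqrt (∑ i, ‖x i‖ ^ 2)

/-- The rank-one tensor `x₁ ⊗ ⋯ ⊗ x_d`. -/
def rankOne {𝕜 : Type*} [RCLike 𝕜] {d : ℕ} {n : Fin d → ℕ}
    (x : ∀ j, Fin (n j) → 𝕜) : (∀ j, Fin (n j)) → 𝕜 :=
  fun i => ∏ j, x j (i j)

/-- The standard inner product `⟨T, Y⟩ = ∑ tᵢ · conj yᵢ` of tensors. -/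
def tinner {𝕜 : Type*} [RCLike 𝕜] {d : ℕ} {n : Fin d → ℕ}
    (T Y : (∀ j, Fin (n j)) → 𝕜) : 𝕜 :=
  ∑ i, T i * (starRingEnd 𝕜) (Y i)

/-- The Hilbert–Schmidt norm of a tensor. -/
def hsNorm {𝕜 : Type*} [RCLike 𝕜] {d : ℕ} {n : Fin d → ℕ}
    (T : (∀ j, Fin (n j)) → 𝕜) : ℝ :=
  Real.sqrt (∑ i, ‖T i‖ ^ 2)

/-- The spectral norm of a tensor:
`max {|⟨T, x₁⊗⋯⊗x_d⟩| : ‖x_j‖ = 1 for all j}`. -/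
def specNorm {𝕜 : Type*} [RCLike 𝕜] {d : ℕ} {n : Fin d → ℕ}
    (T : (∀ j, Fin (n j)) → 𝕜) : ℝ :=
  sSup {r : ℝ | ∃ x : ∀ j, Fin (n j) → 𝕜, (∀ j, vnorm (x j) = 1) ∧
    r = ‖tinner T (rankOne x)‖}

/-- The nuclear norm of a tensor:
`min {∑ᵢ ∏ⱼ ‖x_{i,j}‖ : T = ∑ᵢ x_{i,1}⊗⋯⊗x_{i,d}}`. -/
def nucNorm {𝕜 : Type*} [RCLike 𝕜] {d : ℕ} {n : Fin d → ℕ}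
    (T : (∀ j, Fin (n j)) → 𝕜) : ℝ :=
  sInf {r : ℝ | ∃ (m : ℕ) (x : Fin m → ∀ j, Fin (n j) → 𝕜),
    T = (∑ i, rankOne (x i)) ∧ r = ∑ i, ∏ j, vnorm (x i j)}

/-- `α(n, 𝕜)`: the maximal nuclear norm of a tensor of Hilbert–Schmidt norm one. -/
def alphaN (𝕜 : Type*) [RCLike 𝕜] (d : ℕ) (n : Fin d → ℕ) : ℝ :=
  sSup {r : ℝ | ∃ T : (∀ j, Fin (n j)) → 𝕜, hsNorm T = 1 ∧ r = nucNorm T}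

/-- `β(n, 𝕜)`: the minimal spectral norm of a tensor of Hilbert–Schmidt norm one. -/
def betaN (𝕜 : Type*) [RCLike 𝕜] (d : ℕ) (n : Fin d → ℕ) : ℝ :=
  sInf {r : ℝ | ∃ T : (∀ j, Fin (n j)) → 𝕜, hsNorm T = 1 ∧ r = specNorm T}


theorem Seminorm.exists_dual_apply_eq {𝕜 E : Type*} [RCLike 𝕜] [AddCommGroup E] [Module 𝕜 E]
    (p : Seminorm 𝕜 E) (x : E) : ∃ g : Module.Dual 𝕜 E, g x = p x ∧ ∀ y, ‖g y‖ ≤ p y := by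
  rcases eq_or_ne x 0 with rfl | hx
  · exact ⟨0, by simp, fun y => by simp⟩
  set f : E →ₗ.[𝕜] 𝕜 := LinearPMap.mkSpanSingleton x (p x : 𝕜) hx
  have hfp : ∀ y : f.domain, ‖f.toFun y‖ ≤ p y := by
    rintro ⟨y, hy⟩
    obtain ⟨c, rfl⟩ := Submodule.mem_span_singleton.1 hy
    have hfc : f.toFun ⟨c • x, hy⟩ = c • (p x : 𝕜) :=
      LinearPMap.mkSpanSingleton'_apply _ _ _ c hy
    simp [hfc, map_smul_eq_mul, abs_of_nonneg (apply_nonneg p x)]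
  obtain ⟨g, hgf, hgp⟩ := Module.Dual.exists_extension_of_le_seminorm f.domain f.toFun hfp
  exact ⟨g, (hgf ⟨x, Submodule.mem_span_singleton_self x⟩).trans
    (LinearPMap.mkSpanSingleton_apply 𝕜 𝕜 hx _), hgp⟩

section Tensor

open scoped ComplexConjugate Pointwise

abbrev Tensor (𝕜 : Type*) {d : ℕ} (n : Fin d → ℕ) : Type _ := (∀ j, Fin (n j)) → 𝕜

variable {𝕜 : Type*} [RCLike 𝕜] {d : ℕ} {n : Fin d → ℕ}

lemma hsNorm_eq_norm_toLp (T : Tensor 𝕜 n) :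
    hsNorm T = ‖(WithLp.toLp 2 T : EuclideanSpace 𝕜 (∀ j, Fin (n j)))‖ := by
  rw [EuclideanSpace.norm_eq]; rfl

lemma tinner_eq_inner_toLp (T Y : Tensor 𝕜 n) :
    tinner T Y =
      inner 𝕜 (WithLp.toLp 2 Y : EuclideanSpace 𝕜 (∀ j, Fin (n j))) (WithLp.toLp 2 T) := by
  simp [tinner, PiLp.inner_apply]

lemma norm_tinner_le (T Y : Tensor 𝕜 n) : ‖tinner T Y‖ ≤ hsNorm T * hsNorm Y := by
  rw [tinner_eq_inner_toLp, hsNorm_eq_norm_toLp, hsNorm_eq_norm_toLp, mul_comm]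
  exact norm_inner_le_norm _ _

lemma tinner_self (T : Tensor 𝕜 n) : tinner T T = (hsNorm T ^ 2 : ℝ) := by
  rw [tinner_eq_inner_toLp, hsNorm_eq_norm_toLp, inner_self_eq_norm_sq_to_K, RCLike.ofReal_pow]

lemma smul_eq_smul_of_tinner_eq_hsNorm_mul (T Y : Tensor 𝕜 n)
    (h : tinner T Y = (hsNorm T * hsNorm Y : ℝ)) :
    (hsNorm T : 𝕜) • Y = (hsNorm Y : 𝕜) • T := by
  rw [tinner_eq_inner_toLp, hsNorm_eq_norm_toLp T, hsNorm_eq_norm_toLp Y, mul_comm,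
    RCLike.ofReal_mul, inner_eq_norm_mul_iff] at h
  rw [hsNorm_eq_norm_toLp T, hsNorm_eq_norm_toLp Y]
  exact congrArg WithLp.ofLp h

lemma hsNorm_nonneg (T : Tensor 𝕜 n) : 0 ≤ hsNorm T := Real.sqrt_nonneg _

lemma hsNorm_smul (c : 𝕜) (T : Tensor 𝕜 n) : hsNorm (c • T) = ‖c‖ * hsNorm T := by
  rw [hsNorm_eq_norm_toLp, hsNorm_eq_norm_toLp, WithLp.toLp_smul, norm_smul]

lemma norm_apply_le_hsNorm (T : Tensor 𝕜 n) (i : ∀ j, Fin (n j)) : ‖T i‖ ≤ hsNorm T := by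
  rw [hsNorm_eq_norm_toLp]
  exact PiLp.norm_apply_le (WithLp.toLp 2 T) i

lemma conj_tinner (T Y : Tensor 𝕜 n) : conj (tinner T Y) = tinner Y T := by
  simp [tinner, map_sum, mul_comm]

lemma tinner_smul_left (c : 𝕜) (T Y : Tensor 𝕜 n) : tinner (c • T) Y = c * tinner T Y := by
  simp [tinner, Finset.mul_sum, mul_assoc]

lemma tinner_sum_left {ι : Type*} (s : Finset ι) (T : ι → Tensor 𝕜 n) (Y : Tensor 𝕜 n) :
    tinner (∑ i ∈ s, T i) Y = ∑ i ∈ s, tinner (T i) Y := by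
  simp only [tinner, Finset.sum_apply, Finset.sum_mul]
  exact Finset.sum_comm

lemma vnorm_nonneg {k : ℕ} (x : Fin k → 𝕜) : 0 ≤ vnorm x := Real.sqrt_nonneg _

lemma vnorm_smul {k : ℕ} (c : 𝕜) (x : Fin k → 𝕜) : vnorm (c • x) = ‖c‖ * vnorm x := by
  simp only [vnorm, Pi.smul_apply, smul_eq_mul, norm_mul, mul_pow, ← Finset.mul_sum]
  rw [Real.sqrt_mul (by positivity), Real.sqrt_sq (norm_nonneg c)]

lemma vnorm_single {k : ℕ} (i : Fin k) (c : 𝕜) : vnorm (Pi.single i c) = ‖c‖ := by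
  simp [vnorm, Pi.single_apply, apply_ite, Real.sqrt_sq (norm_nonneg c)]

lemma hsNorm_rankOne (x : ∀ j, Fin (n j) → 𝕜) : hsNorm (rankOne x) = ∏ j, vnorm (x j) := by
  have hsq : ∑ i, ‖rankOne x i‖ ^ 2 = (∏ j, vnorm (x j)) ^ 2 := by
    simp only [← Finset.prod_pow, vnorm, Real.sq_sqrt (Finset.sum_nonneg fun _ _ => sq_nonneg _),
      Finset.prod_univ_sum, Fintype.piFinset_univ, rankOne, norm_prod]
  rw [hsNorm, hsq, Real.sqrt_sq (Finset.prod_nonneg fun j _ => vnorm_nonneg _)]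

lemma rankOne_smul (c : Fin d → 𝕜) (x : ∀ j, Fin (n j) → 𝕜) :
    rankOne (fun j => c j • x j) = (∏ j, c j) • rankOne x := by
  funext i
  simp [rankOne, Finset.prod_mul_distrib]

lemma exists_rankOne_eq_smul (hd : 0 < d) (c : 𝕜) (x : ∀ j, Fin (n j) → 𝕜) :
    ∃ y : ∀ j, Fin (n j) → 𝕜, rankOne y = c • rankOne x ∧
      ∏ j, vnorm (y j) = ‖c‖ * ∏ j, vnorm (x j) := by
  classical
  let c' : Fin d → 𝕜 := fun j => if j = ⟨0, hd⟩ then c else 1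
  refine ⟨fun j => c' j • x j, ?_, ?_⟩
  · rw [rankOne_smul, Fintype.prod_ite_eq']
  · simp only [vnorm_smul, Finset.prod_mul_distrib, c', apply_ite, norm_one,
      Fintype.prod_ite_eq']

lemma rankOne_single (i : ∀ j, Fin (n j)) :
    rankOne (fun j => (Pi.single (i j) 1 : Fin (n j) → 𝕜)) = Pi.single i 1 := by
  funext k
  simp only [rankOne, Pi.single_apply, Finset.prod_boole, Finset.mem_univ, true_implies,
    funext_iff]

def nucCosts (T : Tensor 𝕜 n) : Set ℝ :=
  {r | ∃ (m : ℕ) (x : Fin m → ∀ j, Fin (n j) → 𝕜),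
    T = (∑ i, rankOne (x i)) ∧ r = ∑ i, ∏ j, vnorm (x i j)}

lemma nucNorm_eq_sInf (T : Tensor 𝕜 n) : nucNorm T = sInf (nucCosts T) := rfl

lemma sum_prod_vnorm_mem_nucCosts {ι : Type*} [Fintype ι] (x : ι → ∀ j, Fin (n j) → 𝕜) :
    ∑ i, ∏ j, vnorm (x i j) ∈ nucCosts (∑ i, rankOne (x i)) := by
  let e := (Fintype.equivFin ι).symm
  exact ⟨_, x ∘ e, (Equiv.sum_comp e _).symm, (Equiv.sum_comp e _).symm⟩

lemma nonneg_of_mem_nucCosts {T : Tensor 𝕜 n} {r : ℝ} (hr : r ∈ nucCosts T) : 0 ≤ r := by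
  obtain ⟨m, x, -, rfl⟩ := hr
  exact Finset.sum_nonneg fun i _ => Finset.prod_nonneg fun j _ => vnorm_nonneg _

lemma bddBelow_nucCosts (T : Tensor 𝕜 n) : BddBelow (nucCosts T) :=
  ⟨0, fun _ => nonneg_of_mem_nucCosts⟩

lemma nucNorm_nonneg (T : Tensor 𝕜 n) : 0 ≤ nucNorm T :=
  Real.sInf_nonneg fun _ => nonneg_of_mem_nucCosts

lemma nucNorm_le_of_eq_sum {ι : Type*} [Fintype ι] {T : Tensor 𝕜 n}
    {x : ι → ∀ j, Fin (n j) → 𝕜} (h : T = ∑ i, rankOne (x i)) :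
    nucNorm T ≤ ∑ i, ∏ j, vnorm (x i j) :=
  csInf_le (bddBelow_nucCosts T) (h ▸ sum_prod_vnorm_mem_nucCosts x)

lemma nucNorm_rankOne_le (x : ∀ j, Fin (n j) → 𝕜) : nucNorm (rankOne x) ≤ ∏ j, vnorm (x j) := by
  simpa using nucNorm_le_of_eq_sum (x := fun _ : Unit => x) (by simp)

lemma nucNorm_zero : nucNorm (0 : Tensor 𝕜 n) = 0 :=
  le_antisymm (by simpa using nucNorm_le_of_eq_sum (x := (Empty.elim : Empty → _)) (by simp))
    (nucNorm_nonneg 0)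

lemma sum_norm_mem_nucCosts (hd : 0 < d) (T : Tensor 𝕜 n) : ∑ i, ‖T i‖ ∈ nucCosts T := by
  choose y hy hcost using fun i =>
    exists_rankOne_eq_smul hd (T i) fun j => (Pi.single (i j) 1 : Fin (n j) → 𝕜)
  convert sum_prod_vnorm_mem_nucCosts y using 2
  · simp [hy, rankOne_single, ← Pi.single_smul', Finset.univ_sum_single]
  · simp [hcost, vnorm_single]

lemma nucCosts_nonempty (hd : 0 < d) (T : Tensor 𝕜 n) : (nucCosts T).Nonempty :=
  ⟨_, sum_norm_mem_nucCosts hd T⟩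

lemma nucNorm_le_sum_norm (hd : 0 < d) (T : Tensor 𝕜 n) : nucNorm T ≤ ∑ i, ‖T i‖ :=
  csInf_le (bddBelow_nucCosts T) (sum_norm_mem_nucCosts hd T)

lemma add_nucCosts_subset (A B : Tensor 𝕜 n) : nucCosts A + nucCosts B ⊆ nucCosts (A + B) := by
  rintro _ ⟨_, ⟨m, x, rfl, rfl⟩, _, ⟨m', x', rfl, rfl⟩, rfl⟩
  simpa [Fintype.sum_sum_type] using sum_prod_vnorm_mem_nucCosts (Sum.elim x x')

lemma smul_nucCosts_subset (hd : 0 < d) (c : 𝕜) (T : Tensor 𝕜 n) :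
    ‖c‖ • nucCosts T ⊆ nucCosts (c • T) := by
  rintro _ ⟨_, ⟨m, x, rfl, rfl⟩, rfl⟩
  choose y hy hcost using fun i => exists_rankOne_eq_smul hd c (x i)
  convert sum_prod_vnorm_mem_nucCosts y using 2
  · simp [hy, Finset.smul_sum]
  · simp [hcost, Finset.mul_sum]

lemma nucNorm_add_le (hd : 0 < d) (A B : Tensor 𝕜 n) :
    nucNorm (A + B) ≤ nucNorm A + nucNorm B := by
  rw [nucNorm_eq_sInf, nucNorm_eq_sInf, nucNorm_eq_sInf, ← csInf_add (nucCosts_nonempty hd A)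
    (bddBelow_nucCosts A) (nucCosts_nonempty hd B) (bddBelow_nucCosts B)]
  exact csInf_le_csInf (bddBelow_nucCosts _)
    ((nucCosts_nonempty hd A).add (nucCosts_nonempty hd B)) (add_nucCosts_subset A B)

lemma nucNorm_smul_le (hd : 0 < d) (c : 𝕜) (T : Tensor 𝕜 n) :
    nucNorm (c • T) ≤ ‖c‖ * nucNorm T := by
  rw [nucNorm_eq_sInf, nucNorm_eq_sInf, ← smul_eq_mul, ← Real.sInf_smul_of_nonneg (norm_nonneg c)]
  exact csInf_le_csInf (bddBelow_nucCosts _) (nucCosts_nonempty hd T).smul_set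
    (smul_nucCosts_subset hd c T)

def nucSeminorm (hd : 0 < d) : Seminorm 𝕜 (Tensor 𝕜 n) :=
  .ofSMulLE nucNorm nucNorm_zero (nucNorm_add_le hd) (nucNorm_smul_le hd)

lemma specNorm_nonneg (T : Tensor 𝕜 n) : 0 ≤ specNorm T :=
  Real.sSup_nonneg (by rintro _ ⟨x, -, rfl⟩; exact norm_nonneg _)

lemma norm_tinner_rankOne_le_specNorm (T : Tensor 𝕜 n) {x : ∀ j, Fin (n j) → 𝕜}
    (hx : ∀ j, vnorm (x j) = 1) : ‖tinner T (rankOne x)‖ ≤ specNorm T := by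
  refine le_csSup ⟨hsNorm T, ?_⟩ ⟨x, hx, rfl⟩
  rintro _ ⟨y, hy, rfl⟩
  simpa [hsNorm_rankOne, hy] using norm_tinner_le T (rankOne y)

lemma specNorm_le {T : Tensor 𝕜 n} {a : ℝ} (ha : 0 ≤ a)
    (h : ∀ x : ∀ j, Fin (n j) → 𝕜, (∀ j, vnorm (x j) = 1) → ‖tinner T (rankOne x)‖ ≤ a) :
    specNorm T ≤ a :=
  Real.sSup_le (by rintro _ ⟨x, hx, rfl⟩; exact h x hx) ha

lemma specNorm_smul_le (c : 𝕜) (T : Tensor 𝕜 n) : specNorm (c • T) ≤ ‖c‖ * specNorm T :=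
  specNorm_le (mul_nonneg (norm_nonneg c) (specNorm_nonneg T)) fun x hx => by
    rw [tinner_smul_left, norm_mul]
    exact mul_le_mul_of_nonneg_left (norm_tinner_rankOne_le_specNorm T hx) (norm_nonneg c)

lemma norm_tinner_rankOne_le (x : ∀ j, Fin (n j) → 𝕜) (Y : Tensor 𝕜 n) :
    ‖tinner (rankOne x) Y‖ ≤ (∏ j, vnorm (x j)) * specNorm Y := by
  by_cases hx : ∃ j, vnorm (x j) = 0
  · obtain ⟨j, hj⟩ := hx
    have h0 : ∏ j, vnorm (x j) = 0 := Finset.prod_eq_zero (Finset.mem_univ j) hj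
    simpa [hsNorm_rankOne, h0] using norm_tinner_le (rankOne x) Y
  simp only [not_exists] at hx
  set u : ∀ j, Fin (n j) → 𝕜 := fun j => (vnorm (x j) : 𝕜)⁻¹ • x j
  have hu : ∀ j, vnorm (u j) = 1 := fun j => by
    rw [vnorm_smul, norm_inv, RCLike.norm_ofReal, abs_of_nonneg (vnorm_nonneg _),
      inv_mul_cancel₀ (hx j)]
  have hxu : rankOne x = (∏ j, (vnorm (x j) : 𝕜)) • rankOne u := by
    rw [← rankOne_smul]
    exact congrArg rankOne
      (funext fun j => (smul_inv_smul₀ (RCLike.ofReal_ne_zero.2 (hx j)) _).symm)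
  rw [hxu, tinner_smul_left, norm_mul, norm_prod, ← conj_tinner, RCLike.norm_conj]
  simp only [RCLike.norm_ofReal, abs_of_nonneg (vnorm_nonneg _)]
  exact mul_le_mul_of_nonneg_left (norm_tinner_rankOne_le_specNorm Y hu)
    (Finset.prod_nonneg fun j _ => vnorm_nonneg (x j))

lemma norm_tinner_le_nucNorm_mul_specNorm (hd : 0 < d) (T Y : Tensor 𝕜 n) :
    ‖tinner T Y‖ ≤ nucNorm T * specNorm Y := by
  rw [nucNorm_eq_sInf, mul_comm, ← smul_eq_mul, ← Real.sInf_smul_of_nonneg (specNorm_nonneg Y)]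
  refine le_csInf (nucCosts_nonempty hd T).smul_set ?_
  rintro _ ⟨_, ⟨m, x, rfl, rfl⟩, rfl⟩
  dsimp only [smul_eq_mul]
  rw [tinner_sum_left, Finset.mul_sum]
  refine (norm_sum_le _ _).trans (Finset.sum_le_sum fun i _ => ?_)
  rw [mul_comm]
  exact norm_tinner_rankOne_le (x i) Y

lemma exists_tinner_eq (g : Module.Dual 𝕜 (Tensor 𝕜 n)) :
    ∃ Y : Tensor 𝕜 n, ∀ X, tinner X Y = g X := by
  classical
  refine ⟨fun i => conj (g fun j => if i = j then 1 else 0), fun X => ?_⟩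
  rw [LinearMap.pi_apply_eq_sum_univ g X]
  simp [tinner]

theorem exists_specNorm_le_one_tinner_eq_nucNorm (hd : 0 < d) (T : Tensor 𝕜 n) :
    ∃ Y : Tensor 𝕜 n, specNorm Y ≤ 1 ∧ tinner T Y = nucNorm T := by
  obtain ⟨g, hgT, hg⟩ := (nucSeminorm hd).exists_dual_apply_eq T
  obtain ⟨Y, hY⟩ := exists_tinner_eq g
  refine ⟨Y, specNorm_le zero_le_one fun x hx => ?_, (hY T).trans hgT⟩
  calc ‖tinner Y (rankOne x)‖ = ‖g (rankOne x)‖ := by rw [← conj_tinner, RCLike.norm_conj, hY]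
    _ ≤ nucNorm (rankOne x) := hg _
    _ ≤ ∏ j, vnorm (x j) := nucNorm_rankOne_le x
    _ = 1 := by simp [hx]

lemma alphaN_nonneg : 0 ≤ alphaN 𝕜 d n :=
  Real.sSup_nonneg (by rintro _ ⟨S, -, rfl⟩; exact nucNorm_nonneg S)

lemma betaN_nonneg : 0 ≤ betaN 𝕜 d n :=
  Real.sInf_nonneg (by rintro _ ⟨S, -, rfl⟩; exact specNorm_nonneg S)

lemma nucNorm_le_alphaN (hd : 0 < d) {S : Tensor 𝕜 n} (hS : hsNorm S = 1) :
    nucNorm S ≤ alphaN 𝕜 d n := by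
  refine le_csSup ⟨Fintype.card (∀ j, Fin (n j)), ?_⟩ ⟨S, hS, rfl⟩
  rintro _ ⟨S', hS', rfl⟩
  calc nucNorm S' ≤ ∑ i, ‖S' i‖ := nucNorm_le_sum_norm hd S'
    _ ≤ ∑ _i : (∀ j, Fin (n j)), (1 : ℝ) :=
      Finset.sum_le_sum fun i _ => hS' ▸ norm_apply_le_hsNorm S' i
    _ = Fintype.card (∀ j, Fin (n j)) := by simp

lemma betaN_le_specNorm {S : Tensor 𝕜 n} (hS : hsNorm S = 1) : betaN 𝕜 d n ≤ specNorm S :=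
  csInf_le ⟨0, by rintro _ ⟨S, -, rfl⟩; exact specNorm_nonneg S⟩ ⟨S, hS, rfl⟩

lemma betaN_mul_hsNorm_le_specNorm (Y : Tensor 𝕜 n) : betaN 𝕜 d n * hsNorm Y ≤ specNorm Y := by
  rcases (hsNorm_nonneg Y).eq_or_lt with h | hpos
  · rw [← h, mul_zero]
    exact specNorm_nonneg Y
  have hunit : hsNorm ((hsNorm Y : 𝕜)⁻¹ • Y) = 1 := by
    rw [hsNorm_smul, norm_inv, RCLike.norm_ofReal, abs_of_pos hpos, inv_mul_cancel₀ hpos.ne']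
  calc betaN 𝕜 d n * hsNorm Y ≤ specNorm ((hsNorm Y : 𝕜)⁻¹ • Y) * hsNorm Y :=
        mul_le_mul_of_nonneg_right (betaN_le_specNorm hunit) hpos.le
    _ ≤ (hsNorm Y)⁻¹ * specNorm Y * hsNorm Y := by
        refine mul_le_mul_of_nonneg_right ?_ hpos.le
        simpa [abs_of_pos hpos] using specNorm_smul_le (hsNorm Y : 𝕜)⁻¹ Y
    _ = specNorm Y := by field_simp

lemma one_le_nucNorm_mul_specNorm (hd : 0 < d) {S : Tensor 𝕜 n} (hS : hsNorm S = 1) :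
    1 ≤ nucNorm S * specNorm S := by
  simpa [tinner_self, hS] using norm_tinner_le_nucNorm_mul_specNorm hd S S

lemma betaN_mul_nucNorm_le_hsNorm (hd : 0 < d) (S : Tensor 𝕜 n) :
    betaN 𝕜 d n * nucNorm S ≤ hsNorm S := by
  obtain ⟨Y, hY, hSY⟩ := exists_specNorm_le_one_tinner_eq_nucNorm hd S
  have hnuc : nucNorm S ≤ hsNorm S * hsNorm Y := by
    simpa [hSY, abs_of_nonneg (nucNorm_nonneg S)] using norm_tinner_le S Y
  calc betaN 𝕜 d n * nucNorm S ≤ betaN 𝕜 d n * (hsNorm S * hsNorm Y) :=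
        mul_le_mul_of_nonneg_left hnuc betaN_nonneg
    _ = hsNorm S * (betaN 𝕜 d n * hsNorm Y) := by ring
    _ ≤ hsNorm S * 1 := mul_le_mul_of_nonneg_left
        ((betaN_mul_hsNorm_le_specNorm Y).trans hY) (hsNorm_nonneg S)
    _ = hsNorm S := mul_one _

theorem alphaN_mul_betaN (hd : 0 < d) {T : Tensor 𝕜 n} (hT : hsNorm T = 1) :
    alphaN 𝕜 d n * betaN 𝕜 d n = 1 := by
  refine le_antisymm ?_ ?_
  · rw [mul_comm, alphaN, ← smul_eq_mul, ← Real.sSup_smul_of_nonneg betaN_nonneg]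
    refine Real.sSup_le ?_ zero_le_one
    rintro _ ⟨_, ⟨S, hS, rfl⟩, rfl⟩
    simpa [hS] using betaN_mul_nucNorm_le_hsNorm hd S
  · rw [betaN, ← smul_eq_mul, ← Real.sInf_smul_of_nonneg alphaN_nonneg]
    refine le_csInf ⟨_, _, ⟨T, hT, rfl⟩, rfl⟩ ?_
    rintro _ ⟨_, ⟨S, hS, rfl⟩, rfl⟩
    calc 1 ≤ nucNorm S * specNorm S := one_le_nucNorm_mul_specNorm hd hS
      _ ≤ alphaN 𝕜 d n * specNorm S :=
        mul_le_mul_of_nonneg_right (nucNorm_le_alphaN hd hS) (specNorm_nonneg S)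

theorem nucNorm_eq_alphaN_of_specNorm_eq_betaN (hd : 0 < d) {T : Tensor 𝕜 n}
    (hT : hsNorm T = 1) (h : specNorm T = betaN 𝕜 d n) : nucNorm T = alphaN 𝕜 d n := by
  have hαβ := alphaN_mul_betaN hd hT
  have hprod := one_le_nucNorm_mul_specNorm hd hT
  rw [h] at hprod
  refine le_antisymm (nucNorm_le_alphaN hd hT) ?_
  calc alphaN 𝕜 d n = alphaN 𝕜 d n * 1 := (mul_one _).symm
    _ ≤ alphaN 𝕜 d n * (nucNorm T * betaN 𝕜 d n) :=
        mul_le_mul_of_nonneg_left hprod alphaN_nonneg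
    _ = nucNorm T * (alphaN 𝕜 d n * betaN 𝕜 d n) := by ring
    _ = nucNorm T := by rw [hαβ, mul_one]

theorem specNorm_eq_betaN_of_nucNorm_eq_alphaN (hd : 0 < d) {T : Tensor 𝕜 n}
    (hT : hsNorm T = 1) (h : nucNorm T = alphaN 𝕜 d n) : specNorm T = betaN 𝕜 d n := by
  have hαβ := alphaN_mul_betaN hd hT
  obtain ⟨Y, hY, hTY⟩ := exists_specNorm_le_one_tinner_eq_nucNorm hd T
  have hαY : alphaN 𝕜 d n ≤ hsNorm Y := by
    simpa [hTY, h, hT, abs_of_nonneg alphaN_nonneg] using norm_tinner_le T Y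
  have hβY : betaN 𝕜 d n * hsNorm Y ≤ 1 := (betaN_mul_hsNorm_le_specNorm Y).trans hY
  have hYα : hsNorm Y = alphaN 𝕜 d n := by
    refine le_antisymm ?_ hαY
    calc hsNorm Y = hsNorm Y * (alphaN 𝕜 d n * betaN 𝕜 d n) := by rw [hαβ, mul_one]
      _ = alphaN 𝕜 d n * (betaN 𝕜 d n * hsNorm Y) := by ring
      _ ≤ alphaN 𝕜 d n * 1 := mul_le_mul_of_nonneg_left hβY alphaN_nonneg
      _ = alphaN 𝕜 d n := mul_one _
  have hYT : Y = (alphaN 𝕜 d n : 𝕜) • T := by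
    simpa [hT, hYα] using
      smul_eq_smul_of_tinner_eq_hsNorm_mul T Y (by rw [hTY, h, hT, hYα, one_mul])
  have hTY' : T = (betaN 𝕜 d n : 𝕜) • Y := by
    rw [hYT, smul_smul, ← RCLike.ofReal_mul, mul_comm, hαβ, RCLike.ofReal_one, one_smul]
  refine le_antisymm ?_ (betaN_le_specNorm hT)
  calc specNorm T ≤ ‖(betaN 𝕜 d n : 𝕜)‖ * specNorm Y := hTY' ▸ specNorm_smul_le _ Y
    _ ≤ betaN 𝕜 d n * 1 := by
        rw [RCLike.norm_ofReal, abs_of_nonneg betaN_nonneg]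
        exact mul_le_mul_of_nonneg_left hY betaN_nonneg
    _ = betaN 𝕜 d n := mul_one _

end Tensor

theorem stmt3_general (𝕜 : Type*) [RCLike 𝕜] (d : ℕ) (hd : 3 ≤ d) (n : Fin d → ℕ)
    (T : (∀ j, Fin (n j)) → 𝕜) (hT : hsNorm T = 1) :
    ((nucNorm T = alphaN 𝕜 d n ∨ specNorm T = betaN 𝕜 d n) →
      nucNorm T * specNorm T = 1) ∧
    (nucNorm T = alphaN 𝕜 d n ↔ specNorm T = betaN 𝕜 d n) := by
  have hd₀ : 0 < d := by omega
  have hnuc := specNorm_eq_betaN_of_nucNorm_eq_alphaN hd₀ hT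
  have hspec := nucNorm_eq_alphaN_of_specNorm_eq_betaN hd₀ hT
  refine ⟨fun h => ?_, hnuc, hspec⟩
  obtain ⟨hα, hβ⟩ : nucNorm T = alphaN 𝕜 d n ∧ specNorm T = betaN 𝕜 d n := by
    rcases h with h | h
    exacts [⟨h, hnuc h⟩, ⟨hspec h, h⟩]
  rw [hα, hβ, alphaN_mul_betaN hd₀ hT]

/-- For `d ≥ 3` and `T` of Hilbert–Schmidt norm one: if `‖T‖₁ = α(n,𝕜)`
or `‖T‖_∞ = β(n,𝕜)` then `‖T‖₁·‖T‖_∞ = 1`; in particular `‖T‖₁ = α(n,𝕜)` iff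
`‖T‖_∞ = β(n,𝕜)`. -/
theorem stmt3 (𝕜 : Type*) [RCLike 𝕜] (d : ℕ) (hd : 3 ≤ d) (n : Fin d → ℕ)
    (hn : ∀ j, 1 ≤ n j) (T : (∀ j, Fin (n j)) → 𝕜) (hT : hsNorm T = 1) :
    ((nucNorm T = alphaN 𝕜 d n ∨ specNorm T = betaN 𝕜 d n) →
      nucNorm T * specNorm T = 1) ∧
    (nucNorm T = alphaN 𝕜 d n ↔ specNorm T = betaN 𝕜 d n) :=
  stmt3_general 𝕜 d hd n T hT
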